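/- arXiv:1003.4306 — 5 statements merged into one kernel-verified Lean document; each statement's English description precedes it below -/
import Mathlib

section
/- Let ℓ > 0 and let Z_ℓ be a real Gaussian random variable with mean -ℓ² and variance 2ℓ². Then E[min(1, e^{Z_ℓ})] = 2Φ(-ℓ/√2), where Φ denotes the cumulative distribution function of the standard normal distribution N(0,1). -/
/-!
If `X ~ N(-v/2, v)`, then `eˣ` times the density of `X` is the density of `N(v/2, v)`, so
`E[eˣ; X ≤ 0] = P(N(v/2, v) ≤ 0)`. By the reflection `x ↦ -x`, also
`P(X > 0) = P(N(v/2, v) ≤ 0)`. Splitting `min 1 eˣ` at `0` gives twice this probability,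
which is `Φ(-√v/2)`; for `v = 2ℓ²` this is `Φ(-ℓ/√2)`.
-/

open MeasureTheory ProbabilityTheory Real

/-- Φ, the CDF of the standard normal distribution N(0,1). -/
noncomputable def stdGaussianCDF (x : ℝ) : ℝ :=
  ProbabilityTheory.cdf (ProbabilityTheory.gaussianReal 0 1) x

open Set
open scoped NNReal

namespace ProbabilityTheory

lemma cdf_gaussianReal (μ : ℝ) {v : ℝ≥0} (hv : v ≠ 0) (t : ℝ) :
    cdf (gaussianReal μ v) t = stdGaussianCDF ((t - μ) / √v) := by
  have hσ : 0 < √(v : ℝ) := Real.sqrt_pos.2 (NNReal.coe_pos.2 (pos_iff_ne_zero.2 hv))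
  have hstd : (gaussianReal μ v).map (fun x ↦ (x - μ) / √v) = gaussianReal 0 1 := by
    have hcomp : (gaussianReal μ v).map (fun x ↦ (x - μ) / √v)
        = ((gaussianReal μ v).map (· - μ)).map (· / √v) := by
      rw [Measure.map_map (by fun_prop) (by fun_prop)]
      rfl
    rw [hcomp, gaussianReal_map_sub_const, gaussianReal_map_div_const, sub_self, zero_div]
    congr 1
    ext
    simp [Real.sq_sqrt v.coe_nonneg, hv]
  rw [stdGaussianCDF, cdf_eq_real, cdf_eq_real, ← hstd,
    map_measureReal_apply (by fun_prop) measurableSet_Iic]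
  congr 1
  ext x
  simp [div_le_div_iff_of_pos_right hσ]

lemma exp_mul_gaussianPDFReal (μ : ℝ) (v : ℝ≥0) (x : ℝ) :
    rexp x * gaussianPDFReal μ v x = rexp (μ + v / 2) * gaussianPDFReal (μ + v) v x := by
  rcases eq_or_ne v 0 with rfl | hv
  · simp [gaussianPDFReal_zero_var]
  simp only [gaussianPDFReal, mul_left_comm (rexp _), ← Real.exp_add]
  congr 2
  field_simp
  ring

lemma setIntegral_exp_gaussianReal (μ : ℝ) {v : ℝ≥0} (hv : v ≠ 0) {s : Set ℝ}
    (hs : MeasurableSet s) :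
    ∫ x in s, rexp x ∂gaussianReal μ v =
      rexp (μ + v / 2) * (gaussianReal (μ + v) v).real s := by
  rw [measureReal_def, gaussianReal_apply_eq_integral _ hv, ENNReal.toReal_ofReal
      (setIntegral_nonneg hs fun x _ ↦ gaussianPDFReal_nonneg _ _ x),
    ← integral_const_mul, ← integral_indicator hs, ← integral_indicator hs,
    integral_gaussianReal_eq_integral_smul hv]
  congr 1
  ext x
  by_cases hx : x ∈ s <;> simp [hx, mul_comm (gaussianPDFReal μ v x), exp_mul_gaussianPDFReal]

lemma gaussianReal_real_Ioi (μ : ℝ) {v : ℝ≥0} (hv : v ≠ 0) (t : ℝ) :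
    (gaussianReal μ v).real (Ioi t) = (gaussianReal (-μ) v).real (Iic (-t)) := by
  have := nullSingletonClass_gaussianReal (μ := -μ) hv
  rw [← measureReal_congr Iio_ae_eq_Iic, ← gaussianReal_map_neg,
    map_measureReal_apply measurable_neg measurableSet_Iio]
  congr 1
  ext x
  simp

lemma integral_min_one_exp (μ : Measure ℝ) [IsFiniteMeasure μ] :
    ∫ x, min 1 (rexp x) ∂μ = ∫ x in Iic 0, rexp x ∂μ + μ.real (Ioi 0) := by
  have hint : Integrable (fun x ↦ min 1 (rexp x)) μ := by
    refine Integrable.of_bound (by fun_prop) 1 (ae_of_all _ fun x ↦ ?_)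
    rw [Real.norm_of_nonneg (le_min zero_le_one (exp_pos x).le)]
    exact min_le_left _ _
  rw [← integral_add_compl measurableSet_Iic hint, compl_Iic]
  congr 1
  · exact setIntegral_congr_fun measurableSet_Iic fun x hx ↦ min_eq_right (exp_le_one_iff.2 hx)
  · rw [setIntegral_congr_fun measurableSet_Ioi
        fun x hx ↦ min_eq_left (one_le_exp_iff.2 (le_of_lt hx)),
      setIntegral_const, smul_eq_mul, mul_one]

theorem integral_min_one_exp_gaussianReal {v : ℝ≥0} (hv : v ≠ 0) :
    ∫ x, min 1 (rexp x) ∂gaussianReal (-(v / 2)) v = 2 * stdGaussianCDF (-√v / 2) := by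
  have hmean : -(v / 2 : ℝ) + v = v / 2 := by ring
  have harg : (0 - v / 2 : ℝ) / √v = -√v / 2 := by
    rw [zero_sub, neg_div, div_right_comm, Real.div_sqrt, neg_div]
  rw [integral_min_one_exp, setIntegral_exp_gaussianReal _ hv measurableSet_Iic,
    gaussianReal_real_Ioi _ hv, hmean, neg_add_cancel, exp_zero, one_mul, neg_neg, neg_zero,
    ← cdf_eq_real, cdf_gaussianReal _ hv, harg, two_mul]

end ProbabilityTheory

theorem stmt_1_general {Ω : Type*} [MeasurableSpace Ω] (P : Measure Ω)
    (ℓ : ℝ) (hℓ : 0 < ℓ) (Z : Ω → ℝ) (hZmeas : Measurable Z)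
    (hlaw : P.map Z = gaussianReal (-ℓ ^ 2) (Real.toNNReal (2 * ℓ ^ 2))) :
    ∫ ω, min 1 (Real.exp (Z ω)) ∂P = 2 * stdGaussianCDF (-ℓ / Real.sqrt 2) := by
  set v := Real.toNNReal (2 * ℓ ^ 2)
  have hv_coe : (v : ℝ) = 2 * ℓ ^ 2 := Real.coe_toNNReal _ (by positivity)
  have hv : v ≠ 0 := by
    rw [← NNReal.coe_ne_zero, hv_coe]
    positivity
  have hmean : -ℓ ^ 2 = -(v / 2 : ℝ) := by rw [hv_coe]; ring
  have harg : -√(v : ℝ) / 2 = -ℓ / √2 := by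
    rw [hv_coe, Real.sqrt_mul zero_le_two, Real.sqrt_sq hℓ.le]
    field_simp
    norm_num
  rw [← integral_map (f := fun x ↦ min 1 (rexp x)) hZmeas.aemeasurable (by fun_prop), hlaw,
    hmean, integral_min_one_exp_gaussianReal hv, harg]

/-- Lemma `lem:magic`, Equation (magic): if `Z_ℓ ~ N(-ℓ², 2ℓ²)` then
`E[1 ∧ e^{Z_ℓ}] = 2Φ(-ℓ/√2)`. -/
theorem stmt_1 {Ω : Type*} [MeasurableSpace Ω] (P : Measure Ω) [IsProbabilityMeasure P]
    (ℓ : ℝ) (hℓ : 0 < ℓ) (Z : Ω → ℝ) (hZmeas : Measurable Z)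
    (hlaw : P.map Z = gaussianReal (-ℓ ^ 2) (Real.toNNReal (2 * ℓ ^ 2))) :
    ∫ ω, min 1 (Real.exp (Z ω)) ∂P = 2 * stdGaussianCDF (-ℓ / Real.sqrt 2) :=
  stmt_1_general P ℓ hℓ Z hZmeas hlaw
end

section
/- Let z be a standard normal random variable (law N(0,1)), and let a, b be real constants with a ≠ 0. Then E[ z · min(1, e^{a z + b}) ] = a · exp(a²/2 + b) · Φ( -b/|a| - |a| ), where Φ denotes the cumulative distribution function of the standard normal distribution. -/
open MeasureTheory ProbabilityTheory Real

/-!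
With `φ` the standard normal density, split the expectation at `t = -b/a`, where
`min 1 (exp (a z + b))` changes branch (for `a > 0`; the case `a < 0` follows from the symmetry
`z ↦ -z`). Since `φ' = -z φ`, the part above `t` is `φ t`. Below `t`, exponential tilting
`exp (a z) φ z = exp (a²/2) φ (z - a)` makes the part `exp (a²/2 + b) (a Φ (t - a) - φ (t - a))`,
and the boundary terms cancel because `exp (a²/2 + b) φ (t - a) = exp (a t + b) φ t = φ t`.
-/

open Set
open scoped NNReal

lemma integrable_gaussianReal_iff_integrable_smul {E : Type*} [NormedAddCommGroup E]
    [NormedSpace ℝ E] {μ : ℝ} {v : ℝ≥0} (hv : v ≠ 0) {f : ℝ → E} :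
    Integrable f (gaussianReal μ v) ↔ Integrable (fun x ↦ gaussianPDFReal μ v x • f x) := by
  rw [gaussianReal_of_var_ne_zero μ hv, integrable_withDensity_iff_integrable_smul'
    (measurable_gaussianPDF μ v) (ae_of_all _ fun _ ↦ gaussianPDF_lt_top)]
  simp only [toReal_gaussianPDF]

lemma integrable_sub_mul_gaussianPDFReal (μ : ℝ) (v : ℝ≥0) :
    Integrable fun x ↦ (x - μ) * gaussianPDFReal μ v x := by
  rcases eq_or_ne v 0 with rfl | hv
  · simp [gaussianPDFReal_zero_var]
  · have hid : Integrable (fun x ↦ x - μ) (gaussianReal μ v) :=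
      (memLp_one_iff_integrable.1 (memLp_id_gaussianReal 1)).sub (integrable_const μ)
    simpa only [smul_eq_mul, mul_comm] using
      (integrable_gaussianReal_iff_integrable_smul hv).1 hid

lemma hasDerivAt_gaussianPDFReal_one (μ x : ℝ) :
    HasDerivAt (gaussianPDFReal μ 1) (-(x - μ) * gaussianPDFReal μ 1 x) x := by
  rw [gaussianPDFReal_def]
  refine (((((hasDerivAt_id x).sub_const μ).pow 2).neg.div_const _).exp.const_mul _).congr_deriv ?_
  simp only [NNReal.coe_one, id_eq, Pi.neg_apply, Pi.pow_apply]
  ring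

lemma integral_Iic_sub_mul_gaussianPDFReal (μ c : ℝ) :
    ∫ x in Iic c, (x - μ) * gaussianPDFReal μ 1 x = -gaussianPDFReal μ 1 c := by
  have hderiv : ∀ x ∈ Iic c, HasDerivAt (-gaussianPDFReal μ 1)
      ((x - μ) * gaussianPDFReal μ 1 x) x := fun x _ ↦
    (hasDerivAt_gaussianPDFReal_one μ x).neg.congr_deriv (by ring)
  have hint := (integrable_sub_mul_gaussianPDFReal μ 1).integrableOn (s := Iic c)
  have hlim := tendsto_zero_of_hasDerivAt_of_integrableOn_Iic hderiv hint
    (integrable_gaussianPDFReal μ 1).neg.integrableOn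
  simpa using integral_Iic_of_hasDerivAt_of_tendsto' hderiv hint hlim

lemma integral_Ioi_sub_mul_gaussianPDFReal (μ c : ℝ) :
    ∫ x in Ioi c, (x - μ) * gaussianPDFReal μ 1 x = gaussianPDFReal μ 1 c := by
  have hderiv : ∀ x ∈ Ici c, HasDerivAt (-gaussianPDFReal μ 1)
      ((x - μ) * gaussianPDFReal μ 1 x) x := fun x _ ↦
    (hasDerivAt_gaussianPDFReal_one μ x).neg.congr_deriv (by ring)
  have hint := (integrable_sub_mul_gaussianPDFReal μ 1).integrableOn (s := Ioi c)
  have hlim := tendsto_zero_of_hasDerivAt_of_integrableOn_Ioi (fun x hx ↦ hderiv x (mem_Ici.2 hx.out.le))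
    hint (integrable_gaussianPDFReal μ 1).neg.integrableOn
  simpa using integral_Ioi_of_hasDerivAt_of_tendsto' hderiv hint hlim

lemma cdf_gaussianReal_eq_integral (μ : ℝ) {v : ℝ≥0} (hv : v ≠ 0) (c : ℝ) :
    cdf (gaussianReal μ v) c = ∫ x in Iic c, gaussianPDFReal μ v x := by
  rw [cdf_eq_real, measureReal_def, gaussianReal_apply_eq_integral μ hv,
    ENNReal.toReal_ofReal (integral_nonneg fun x ↦ gaussianPDFReal_nonneg μ v x)]

lemma cdf_gaussianReal_one (μ c : ℝ) : cdf (gaussianReal μ 1) c = stdGaussianCDF (c - μ) := by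
  rw [stdGaussianCDF, cdf_eq_real, cdf_eq_real, ← zero_add μ, ← gaussianReal_map_add_const,
    map_measureReal_apply (measurable_add_const μ) measurableSet_Iic]
  congr 1
  ext x
  simp [le_sub_iff_add_le]

lemma integral_Iic_mul_gaussianPDFReal_one (μ c : ℝ) :
    ∫ x in Iic c, x * gaussianPDFReal μ 1 x
      = μ * stdGaussianCDF (c - μ) - gaussianPDFReal μ 1 c := by
  have hsplit : ∀ x, x * gaussianPDFReal μ 1 x
      = (x - μ) * gaussianPDFReal μ 1 x + μ * gaussianPDFReal μ 1 x := fun x ↦ by ring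
  simp_rw [hsplit]
  rw [integral_add (integrable_sub_mul_gaussianPDFReal μ 1).integrableOn
      ((integrable_gaussianPDFReal μ 1).const_mul μ).integrableOn,
    integral_const_mul, integral_Iic_sub_mul_gaussianPDFReal, ← cdf_gaussianReal_eq_integral μ
      one_ne_zero, cdf_gaussianReal_one]
  ring

lemma exp_mul_mul_gaussianPDFReal_zero_one (a x : ℝ) :
    rexp (a * x) * gaussianPDFReal 0 1 x = rexp (a ^ 2 / 2) * gaussianPDFReal a 1 x := by
  simp only [gaussianPDFReal, NNReal.coe_one, mul_one, sub_zero]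
  rw [mul_left_comm, ← exp_add, mul_left_comm (rexp _), ← exp_add]
  congr 2
  ring

lemma integrable_mul_min_one_exp_gaussianReal (μ : ℝ) (v : ℝ≥0) (a b : ℝ) :
    Integrable (fun x ↦ x * min 1 (rexp (a * x + b))) (gaussianReal μ v) := by
  refine (memLp_one_iff_integrable.1 (memLp_id_gaussianReal 1)).mono
    (by fun_prop : Continuous _).aestronglyMeasurable (ae_of_all _ fun x ↦ ?_)
  have hmin : |min 1 (rexp (a * x + b))| ≤ 1 := by
    rw [abs_of_nonneg (le_min zero_le_one (exp_pos _).le)]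
    exact min_le_left _ _
  simpa only [norm_mul, Real.norm_eq_abs, id] using
    mul_le_of_le_one_right (abs_nonneg x) hmin

lemma integral_mul_min_one_exp_gaussianReal_of_pos {a : ℝ} (ha : 0 < a) (b : ℝ) :
    ∫ x, x * min 1 (rexp (a * x + b)) ∂gaussianReal 0 1
      = a * rexp (a ^ 2 / 2 + b) * stdGaussianCDF (-b / a - a) := by
  set t := -b / a with ht
  have hint := (integrable_gaussianReal_iff_integrable_smul one_ne_zero).1
    (integrable_mul_min_one_exp_gaussianReal 0 1 a b)
  have hIic : ∫ x in Iic t, gaussianPDFReal 0 1 x • (x * min 1 (rexp (a * x + b)))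
      = rexp (a ^ 2 / 2 + b) * (a * stdGaussianCDF (t - a) - gaussianPDFReal a 1 t) := by
    rw [← integral_Iic_mul_gaussianPDFReal_one, ← integral_const_mul]
    refine setIntegral_congr_fun measurableSet_Iic fun x hx ↦ ?_
    have hneg : a * x + b ≤ 0 := by
      have := (le_div_iff₀ ha).1 hx
      linarith
    rw [smul_eq_mul, min_eq_right (exp_le_one_iff.2 hneg), exp_add, add_comm, exp_add]
    linear_combination (rexp b * x) * exp_mul_mul_gaussianPDFReal_zero_one a x
  have hIoi : ∫ x in Ioi t, gaussianPDFReal 0 1 x • (x * min 1 (rexp (a * x + b)))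
      = gaussianPDFReal 0 1 t := by
    rw [← integral_Ioi_sub_mul_gaussianPDFReal]
    refine setIntegral_congr_fun measurableSet_Ioi fun x hx ↦ ?_
    have hpos : 0 ≤ a * x + b := by
      have := (div_lt_iff₀ ha).1 hx
      linarith
    rw [smul_eq_mul, min_eq_left (one_le_exp hpos)]
    ring
  have htilt : rexp (a ^ 2 / 2 + b) * gaussianPDFReal a 1 t = gaussianPDFReal 0 1 t := by
    have hat : a * t + b = 0 := by
      rw [ht]
      field_simp
      ring
    rw [exp_add, mul_right_comm, ← exp_mul_mul_gaussianPDFReal_zero_one, mul_right_comm,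
      ← exp_add, hat, exp_zero, one_mul]
  rw [integral_gaussianReal_eq_integral_smul one_ne_zero,
    ← intervalIntegral.integral_Iic_add_Ioi hint.integrableOn hint.integrableOn, hIic, hIoi]
  linear_combination -htilt

lemma integral_mul_min_one_exp_gaussianReal_of_neg {a : ℝ} (ha : a < 0) (b : ℝ) :
    ∫ x, x * min 1 (rexp (a * x + b)) ∂gaussianReal 0 1
      = a * rexp (a ^ 2 / 2 + b) * stdGaussianCDF (b / a + a) := by
  have hsymm : ∫ x, x * min 1 (rexp (a * x + b)) ∂gaussianReal 0 1
      = ∫ x, -x * min 1 (rexp (a * -x + b)) ∂gaussianReal 0 1 := by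
    have := integral_map (μ := gaussianReal 0 1) measurable_neg.aemeasurable
      (f := fun x ↦ x * min 1 (rexp (a * x + b))) (by fun_prop : Continuous _).aestronglyMeasurable
    rwa [gaussianReal_map_neg, neg_zero] at this
  have hflip : ∀ x : ℝ, -x * min 1 (rexp (a * -x + b)) = -(x * min 1 (rexp (-a * x + b))) :=
    fun x ↦ by ring_nf
  simp_rw [hsymm, hflip]
  rw [integral_neg, integral_mul_min_one_exp_gaussianReal_of_pos (neg_pos.2 ha), neg_sq,
    neg_div_neg_eq, sub_neg_eq_add]
  ring

lemma integral_mul_min_one_exp_gaussianReal {a : ℝ} (ha : a ≠ 0) (b : ℝ) :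
    ∫ x, x * min 1 (rexp (a * x + b)) ∂gaussianReal 0 1
      = a * rexp (a ^ 2 / 2 + b) * stdGaussianCDF (-b / |a| - |a|) := by
  rcases ha.lt_or_gt with ha | ha
  · rw [abs_of_neg ha, neg_div_neg_eq, sub_neg_eq_add]
    exact integral_mul_min_one_exp_gaussianReal_of_neg ha b
  · rw [abs_of_pos ha]
    exact integral_mul_min_one_exp_gaussianReal_of_pos ha b

theorem stmt_2_general {Ω : Type*} [MeasurableSpace Ω] (P : Measure Ω)
    (z : Ω → ℝ) (hzmeas : Measurable z) (hlaw : P.map z = gaussianReal 0 1)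
    (a b : ℝ) (ha : a ≠ 0) :
    ∫ ω, z ω * min 1 (Real.exp (a * z ω + b)) ∂P
      = a * Real.exp (a ^ 2 / 2 + b) * stdGaussianCDF (-b / |a| - |a|) := by
  rw [← integral_mul_min_one_exp_gaussianReal ha b, ← hlaw,
    integral_map hzmeas.aemeasurable (by fun_prop : Continuous _).aestronglyMeasurable]

/-- Lemma `lem:magic`, Equation (normmo): for `z ~ N(0,1)` and reals `a ≠ 0`, `b`,
`E[z (1 ∧ e^{az+b})] = a exp(a²/2 + b) Φ(-b/|a| - |a|)`. -/
theorem stmt_2 {Ω : Type*} [MeasurableSpace Ω] (P : Measure Ω) [IsProbabilityMeasure P]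
    (z : Ω → ℝ) (hzmeas : Measurable z) (hlaw : P.map z = gaussianReal 0 1)
    (a b : ℝ) (ha : a ≠ 0) :
    ∫ ω, z ω * min 1 (Real.exp (a * z ω + b)) ∂P
      = a * Real.exp (a ^ 2 / 2 + b) * stdGaussianCDF (-b / |a| - |a|) :=
  stmt_2_general P z hzmeas hlaw a b ha
end

section
/- Let μ and ν be Borel probability measures on ℝ. Suppose ν is absolutely continuous with respect to Lebesgue measure with a density bounded almost everywhere by a constant M > 0. Suppose W ≥ 0 is such that for every L > 0 and every L-Lipschitz function g : ℝ → ℝ (with values in [0,1]), |∫ g dμ − ∫ g dν| ≤ L · W. Then the Kolmogorov–Smirnov distance satisfies sup_{t∈ℝ} |μ((-∞, t]) − ν((-∞, t])| ≤ √(4 M W). -/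
/-!
The ramp equal to `1` on `(-∞, s]`, to `0` on `[s + ε, ∞)` and affine in between is
`ε⁻¹`-Lipschitz, so testing the Wasserstein bound against it gives the Lévy-type comparison
`F_μ(s) ≤ F_ν(s + ε) + W/ε`, and symmetrically `F_ν(s - ε) ≤ F_μ(s) + W/ε`. The density bound
makes `F_ν` `M`-Lipschitz, which turns this into `|F_μ - F_ν| ≤ M ε + W/ε`; the choice
`ε = √(W/M)` gives `2√(MW)`.
-/

open MeasureTheory Set

noncomputable def rampDown (s ε : ℝ) (x : ℝ) : ℝ := max 0 (min 1 ((s + ε - x) / ε))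

section Ramp

variable {s ε : ℝ}

lemma rampDown_mem_Icc (x : ℝ) : rampDown s ε x ∈ Icc (0 : ℝ) 1 :=
  ⟨le_max_left _ _, max_le zero_le_one (min_le_left _ _)⟩

lemma lipschitzWith_rampDown (hε : 0 < ε) : LipschitzWith (Real.toNNReal ε⁻¹) (rampDown s ε) := by
  have affine : LipschitzWith (Real.toNNReal ε⁻¹) fun x : ℝ ↦ (s + ε - x) / ε := by
    refine LipschitzWith.of_dist_le_mul fun x y ↦ le_of_eq ?_
    rw [Real.coe_toNNReal _ (inv_nonneg.2 hε.le), Real.dist_eq, Real.dist_eq, ← sub_div,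
      abs_div, abs_of_pos hε, div_eq_inv_mul, sub_sub_sub_cancel_left, abs_sub_comm]
  exact (affine.const_min 1).const_max 0

lemma continuous_rampDown : Continuous (rampDown s ε) := by
  unfold rampDown; fun_prop

lemma indicator_Iic_le_rampDown (hε : 0 < ε) :
    (Iic s).indicator 1 ≤ rampDown s ε := by
  intro x
  by_cases hx : x ≤ s
  · have : 1 ≤ (s + ε - x) / ε := by rw [le_div_iff₀ hε]; linarith
    simp [indicator_of_mem (mem_Iic.2 hx), rampDown, this]
  · simp [indicator_of_notMem (mt mem_Iic.1 hx), (rampDown_mem_Icc x).1]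

lemma rampDown_le_indicator_Iic (hε : 0 ≤ ε) :
    rampDown s ε ≤ (Iic (s + ε)).indicator 1 := by
  intro x
  by_cases hx : x ≤ s + ε
  · simpa [indicator_of_mem (mem_Iic.2 hx)] using (rampDown_mem_Icc x).2
  · have : (s + ε - x) / ε ≤ 0 := div_nonpos_of_nonpos_of_nonneg (by linarith) hε
    simp [indicator_of_notMem (mt mem_Iic.1 hx), rampDown, this]

variable (μ : Measure ℝ) [IsFiniteMeasure μ]

lemma integrable_rampDown : Integrable (rampDown s ε) μ :=
  .of_bound continuous_rampDown.aestronglyMeasurable 1 <| .of_forall fun x ↦ by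
    rw [Real.norm_of_nonneg (rampDown_mem_Icc x).1]; exact (rampDown_mem_Icc x).2

lemma measureReal_Iic_le_integral_rampDown (hε : 0 < ε) :
    μ.real (Iic s) ≤ ∫ x, rampDown s ε x ∂μ := by
  rw [← integral_indicator_one measurableSet_Iic]
  exact integral_mono ((integrable_const 1).indicator measurableSet_Iic)
    (integrable_rampDown μ) (indicator_Iic_le_rampDown hε)

lemma integral_rampDown_le_measureReal_Iic (hε : 0 ≤ ε) :
    ∫ x, rampDown s ε x ∂μ ≤ μ.real (Iic (s + ε)) := by
  rw [← integral_indicator_one measurableSet_Iic]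
  exact integral_mono (integrable_rampDown μ) ((integrable_const 1).indicator measurableSet_Iic)
    (rampDown_le_indicator_Iic hε)

end Ramp

lemma measureReal_Iic_le_of_integral_rampDown_sub_le {μ ν : Measure ℝ}
    [IsFiniteMeasure μ] [IsFiniteMeasure ν] {s ε δ : ℝ} (hε : 0 < ε)
    (h : ∫ x, rampDown s ε x ∂μ - ∫ x, rampDown s ε x ∂ν ≤ δ) :
    μ.real (Iic s) ≤ ν.real (Iic (s + ε)) + δ := by
  linarith [measureReal_Iic_le_integral_rampDown μ hε (s := s),
    integral_rampDown_le_measureReal_Iic ν hε.le (s := s)]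

lemma measure_le_mul_of_rnDeriv_le {α : Type*} [MeasurableSpace α] {μ ν : Measure α}
    [ν.HaveLebesgueDecomposition μ] [SFinite μ] {c : ENNReal} (hac : ν ≪ μ)
    (hdens : ∀ᵐ x ∂μ, ν.rnDeriv μ x ≤ c) (s : Set α) : ν s ≤ c * μ s :=
  calc ν s = ∫⁻ x in s, ν.rnDeriv μ x ∂μ := (Measure.setLIntegral_rnDeriv hac s).symm
    _ ≤ ∫⁻ _ in s, c ∂μ := lintegral_mono_ae (ae_restrict_of_ae hdens)
    _ = c * μ s := setLIntegral_const s c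

lemma measureReal_Iic_add_le {ν : Measure ℝ} [IsFiniteMeasure ν] {M : ℝ} (hM : 0 ≤ M)
    (hac : ν ≪ volume) (hdens : ∀ᵐ x, ν.rnDeriv volume x ≤ ENNReal.ofReal M)
    (a : ℝ) {ε : ℝ} (hε : 0 ≤ ε) : ν.real (Iic (a + ε)) ≤ ν.real (Iic a) + M * ε := by
  have hIoc : ν.real (Ioc a (a + ε)) ≤ M * ε := by
    have := measure_le_mul_of_rnDeriv_le hac hdens (Ioc a (a + ε))
    rw [Real.volume_Ioc, add_sub_cancel_left, ← ENNReal.ofReal_mul hM] at this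
    exact ENNReal.toReal_le_of_le_ofReal (by positivity) this
  rw [← Iic_union_Ioc_eq_Iic (le_add_of_nonneg_right hε),
    measureReal_union (Iic_disjoint_Ioc le_rfl) measurableSet_Ioc]
  linarith

lemma le_sqrt_four_mul_mul_of_forall_le_mul_add_div {x M W : ℝ} (hM : 0 < M) (hW : 0 ≤ W)
    (h : ∀ ε > 0, x ≤ M * ε + W / ε) : x ≤ √(4 * M * W) := by
  rcases hW.eq_or_lt with rfl | hW
  · refine le_of_forall_pos_le_add fun δ hδ ↦ ?_
    simpa [mul_div_cancel₀ _ hM.ne'] using h (δ / M) (by positivity)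
  · obtain ⟨r, hr, rfl⟩ : ∃ r > 0, W = M * r ^ 2 :=
      ⟨√(W / M), Real.sqrt_pos.2 (div_pos hW hM), by
        rw [Real.sq_sqrt (div_pos hW hM).le, mul_div_cancel₀ _ hM.ne']⟩
    convert h r hr using 1
    rw [show 4 * M * (M * r ^ 2) = (2 * M * r) ^ 2 by ring, Real.sqrt_sq (by positivity)]
    field_simp
    ring

/-- Lemma `lem:kswass`: if `ν` has a Lebesgue density bounded a.e. by `M > 0`
and the 1-Wasserstein distance between `μ` and `ν` is at most `W` (expressed
via Lipschitz test functions with values in `[0,1]`), then the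
Kolmogorov–Smirnov distance satisfies `KS(μ,ν) ≤ √(4MW)`. -/
theorem stmt_7 (μ ν : Measure ℝ) [IsProbabilityMeasure μ] [IsProbabilityMeasure ν]
    (M W : ℝ) (hM : 0 < M) (hW : 0 ≤ W)
    (hac : ν ≪ volume)
    (hdens : ∀ᵐ x ∂(volume : Measure ℝ), ν.rnDeriv volume x ≤ ENNReal.ofReal M)
    (hWass : ∀ L : ℝ, 0 < L → ∀ g : ℝ → ℝ, LipschitzWith (Real.toNNReal L) g →
      (∀ x, g x ∈ Set.Icc (0 : ℝ) 1) →
      |(∫ x, g x ∂μ) - ∫ x, g x ∂ν| ≤ L * W) :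
    ∀ t : ℝ, |(μ (Set.Iic t)).toReal - (ν (Set.Iic t)).toReal| ≤ Real.sqrt (4 * M * W) := by
  intro t
  refine le_sqrt_four_mul_mul_of_forall_le_mul_add_div hM hW fun ε hε ↦ ?_
  have hramp : ∀ s, |∫ x, rampDown s ε x ∂μ - ∫ x, rampDown s ε x ∂ν| ≤ W / ε := fun s ↦ by
    simpa [div_eq_inv_mul] using
      hWass ε⁻¹ (inv_pos.2 hε) _ (lipschitzWith_rampDown hε) rampDown_mem_Icc
  have hμν := measureReal_Iic_le_of_integral_rampDown_sub_le hε
    (le_of_abs_le (hramp t))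
  have hνμ := measureReal_Iic_le_of_integral_rampDown_sub_le hε
    (μ := ν) (ν := μ) (s := t - ε) (by linarith [neg_le_of_abs_le (hramp (t - ε))])
  rw [sub_add_cancel] at hνμ
  have hν := measureReal_Iic_add_le hM.le hac hdens
  have hνt : ν.real (Iic t) ≤ ν.real (Iic (t - ε)) + M * ε := by
    simpa using hν (t - ε) hε.le
  change |μ.real (Iic t) - ν.real (Iic t)| ≤ _
  rw [abs_le]
  constructor <;> linarith [hν t hε.le]
end

section
/- There exists a constant M > 0, depending only on ℓ, such that for every N ∈ ℕ, every ζ ∈ ℝ^N and every index 1 ≤ i ≤ N: for every 1-Lipschitz function f : ℝ → ℝ, |E[f(R(ζ,ξ))] − E[f(R_i(ζ,ξ))]| ≤ (M/√N)(1 + |ζ_i|). That is, Wass(R(ζ,ξ), R_i(ζ,ξ)) ≤ (M/√N)(|ζ_i| + 1). -/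
/-!
Couple `R` and `R_i` through the same `ξ`: then `R - R_i = -√(2ℓ²/N) ζ_i ξ_i - (ℓ²/N) ξ_i²`,
and for a 1-Lipschitz `f` the difference of expectations is at most `𝔼|R - R_i|
≤ √(2ℓ²/N) |ζ_i| 𝔼|ξ_i| + (ℓ²/N) 𝔼ξ_i²`. Since `𝔼|ξ_i| ≤ 1 = 𝔼ξ_i²`, `√2 ≤ 2` and `1/N ≤ 1/√N`,
this is at most `(1 + |ℓ|)² / √N · (1 + |ζ_i|)`.
-/

open MeasureTheory ProbabilityTheory

/-- The joint law of `N` i.i.d. standard normal random variables `ξ = (ξ₁,…,ξ_N)`. -/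
noncomputable def gaussPi (N : ℕ) : Measure (Fin N → ℝ) :=
  Measure.pi fun _ => ProbabilityTheory.gaussianReal 0 1

/-- `R(ζ,ξ) = −√(2ℓ²/N) Σ_j ζ_j ξ_j − (ℓ²/N) Σ_j ξ_j²`. -/
noncomputable def Rfun (ℓ : ℝ) (N : ℕ) (ζ ξ : Fin N → ℝ) : ℝ :=
  -Real.sqrt (2 * ℓ ^ 2 / N) * ∑ j, ζ j * ξ j - ℓ ^ 2 / N * ∑ j, ξ j ^ 2

/-- `R_i(ζ,ξ) = −√(2ℓ²/N) Σ_{j≠i} ζ_j ξ_j − (ℓ²/N) Σ_{j≠i} ξ_j²`. -/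
noncomputable def Rifun (ℓ : ℝ) (N : ℕ) (ζ ξ : Fin N → ℝ) (i : Fin N) : ℝ :=
  -Real.sqrt (2 * ℓ ^ 2 / N) * ∑ j ∈ Finset.univ.erase i, ζ j * ξ j
    - ℓ ^ 2 / N * ∑ j ∈ Finset.univ.erase i, ξ j ^ 2

/-- `R_{ij}(ζ,ξ) = −√(2ℓ²/N) Σ_{k∉{i,j}} ζ_k ξ_k − (ℓ²/N) Σ_{k∉{i,j}} ξ_k²`. -/
noncomputable def Rijfun (ℓ : ℝ) (N : ℕ) (ζ ξ : Fin N → ℝ) (i j : Fin N) : ℝ :=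
  -Real.sqrt (2 * ℓ ^ 2 / N) * ∑ k ∈ (Finset.univ.erase i).erase j, ζ k * ξ k
    - ℓ ^ 2 / N * ∑ k ∈ (Finset.univ.erase i).erase j, ξ k ^ 2

section Lipschitz

variable {Ω : Type*} [MeasurableSpace Ω] {μ : Measure Ω} [IsFiniteMeasure μ]
  {K : NNReal} {f : ℝ → ℝ} {X Y : Ω → ℝ}

lemma LipschitzWith.integrable_comp (hf : LipschitzWith K f) (hX : Integrable X μ) :
    Integrable (fun ω => f (X ω)) μ := by
  refine ((integrable_const ‖f 0‖).add (hX.norm.const_mul K)).mono'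
    (hf.continuous.comp_aestronglyMeasurable hX.1) (ae_of_all _ fun ω => ?_)
  show ‖f (X ω)‖ ≤ ‖f 0‖ + K * ‖X ω‖
  have h := hf.norm_sub_le (X ω) 0
  rw [sub_zero] at h
  linarith [norm_sub_norm_le (f (X ω)) (f 0)]

lemma LipschitzWith.abs_integral_comp_sub_le (hf : LipschitzWith K f) (hX : Integrable X μ)
    (hY : Integrable Y μ) :
    |∫ ω, f (X ω) ∂μ - ∫ ω, f (Y ω) ∂μ| ≤ K * ∫ ω, |X ω - Y ω| ∂μ := by
  rw [← integral_sub (hf.integrable_comp hX) (hf.integrable_comp hY), ← integral_const_mul]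
  refine abs_integral_le_integral_abs.trans <|
    integral_mono ((hf.integrable_comp hX).sub (hf.integrable_comp hY)).abs
      ((hX.sub hY).abs.const_mul _) fun ω => ?_
  simpa only [Real.dist_eq] using hf.dist_le_mul (X ω) (Y ω)

end Lipschitz

lemma integral_sq_gaussianReal (v : NNReal) : ∫ x, x ^ 2 ∂gaussianReal 0 v = v := by
  rw [← variance_of_integral_eq_zero aemeasurable_id' integral_id_gaussianReal,
    variance_fun_id_gaussianReal]

lemma integral_abs_gaussianReal_le_one : ∫ x, |x| ∂gaussianReal 0 1 ≤ 1 := by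
  have hsq : Integrable (fun x : ℝ => x ^ 2) (gaussianReal 0 1) :=
    (memLp_id_gaussianReal 2).integrable_sq
  have habs_le (x : ℝ) : |x| ≤ (1 + x ^ 2) / 2 := by nlinarith [sq_nonneg (|x| - 1), sq_abs x]
  calc ∫ x, |x| ∂gaussianReal 0 1 ≤ ∫ x, (1 + x ^ 2) / 2 ∂gaussianReal 0 1 :=
        integral_mono ((memLp_id_gaussianReal 1).integrable le_rfl).abs
          (((integrable_const 1).add hsq).div_const 2) habs_le
    _ = 1 := by
        rw [integral_div, integral_add (integrable_const 1) hsq, integral_sq_gaussianReal]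
        simp

lemma integral_abs_mul_add_mul_sq_gaussianReal_le (a b : ℝ) :
    ∫ x, |a * x + b * x ^ 2| ∂gaussianReal 0 1 ≤ |a| + |b| := by
  have habs : Integrable (fun x : ℝ => |x|) (gaussianReal 0 1) :=
    ((memLp_id_gaussianReal 1).integrable le_rfl).abs
  have hsq : Integrable (fun x : ℝ => x ^ 2) (gaussianReal 0 1) :=
    (memLp_id_gaussianReal 2).integrable_sq
  have hbound : Integrable (fun x : ℝ => |a| * |x| + |b| * x ^ 2) (gaussianReal 0 1) :=
    (habs.const_mul _).add (hsq.const_mul _)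
  have hle (x : ℝ) : |a * x + b * x ^ 2| ≤ |a| * |x| + |b| * x ^ 2 := by
    have h := abs_add_le (a * x) (b * x ^ 2)
    rwa [abs_mul, abs_mul, abs_of_nonneg (sq_nonneg x)] at h
  calc ∫ x, |a * x + b * x ^ 2| ∂gaussianReal 0 1
      ≤ ∫ x, (|a| * |x| + |b| * x ^ 2) ∂gaussianReal 0 1 :=
        integral_mono (hbound.mono' (by fun_prop)
          (ae_of_all _ fun x => (abs_abs _).trans_le (hle x))) hbound hle
    _ = |a| * ∫ x, |x| ∂gaussianReal 0 1 + |b| := by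
        rw [integral_add (habs.const_mul _) (hsq.const_mul _), integral_const_mul,
          integral_const_mul, integral_sq_gaussianReal, NNReal.coe_one, mul_one]
    _ ≤ |a| + |b| := by
        gcongr
        exact mul_le_of_le_one_right (abs_nonneg a) integral_abs_gaussianReal_le_one

instance isProbabilityMeasure_gaussPi (N : ℕ) : IsProbabilityMeasure (gaussPi N) := by
  unfold gaussPi; infer_instance

lemma measurePreserving_eval_gaussPi (N : ℕ) (i : Fin N) :
    MeasurePreserving (Function.eval i) (gaussPi N) (gaussianReal 0 1) :=
  measurePreserving_eval _ i

lemma integral_comp_eval_gaussPi (N : ℕ) (i : Fin N) {g : ℝ → ℝ} (hg : Continuous g) :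
    ∫ ξ, g (ξ i) ∂gaussPi N = ∫ x, g x ∂gaussianReal 0 1 := by
  rw [← (measurePreserving_eval_gaussPi N i).map_eq,
    integral_map (measurable_pi_apply i).aemeasurable hg.aestronglyMeasurable]

lemma memLp_eval_gaussPi (N : ℕ) (i : Fin N) (p : NNReal) :
    MemLp (fun ξ : Fin N → ℝ => ξ i) p (gaussPi N) :=
  (memLp_id_gaussianReal p).comp_measurePreserving (measurePreserving_eval_gaussPi N i)

lemma integrable_mul_sum_sub_mul_sum_sq_gaussPi (N : ℕ) (a b : ℝ) (ζ : Fin N → ℝ)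
    (s : Finset (Fin N)) :
    Integrable (fun ξ => a * ∑ j ∈ s, ζ j * ξ j - b * ∑ j ∈ s, ξ j ^ 2) (gaussPi N) :=
  ((integrable_finsetSum s fun j _ =>
      ((memLp_eval_gaussPi N j 1).integrable le_rfl).const_mul (ζ j)).const_mul a).sub
    ((integrable_finsetSum s fun j _ => (memLp_eval_gaussPi N j 2).integrable_sq).const_mul b)

lemma Rfun_sub_Rifun (ℓ : ℝ) (N : ℕ) (ζ ξ : Fin N → ℝ) (i : Fin N) :
    Rfun ℓ N ζ ξ - Rifun ℓ N ζ ξ i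
      = -(Real.sqrt (2 * ℓ ^ 2 / N) * ζ i) * ξ i + -(ℓ ^ 2 / N) * ξ i ^ 2 := by
  rw [Rfun, Rifun, ← Finset.add_sum_erase _ _ (Finset.mem_univ i),
    ← Finset.add_sum_erase _ (fun j => ξ j ^ 2) (Finset.mem_univ i)]
  ring

lemma integral_abs_Rfun_sub_Rifun_le (ℓ : ℝ) (N : ℕ) (ζ : Fin N → ℝ) (i : Fin N) :
    ∫ ξ, |Rfun ℓ N ζ ξ - Rifun ℓ N ζ ξ i| ∂gaussPi N
      ≤ Real.sqrt (2 * ℓ ^ 2 / N) * |ζ i| + ℓ ^ 2 / N := by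
  simp_rw [Rfun_sub_Rifun]
  rw [integral_comp_eval_gaussPi N i (g := fun x => |_ * x + _ * x ^ 2|) (by fun_prop)]
  refine (integral_abs_mul_add_mul_sq_gaussianReal_le _ _).trans_eq ?_
  rw [abs_neg, abs_neg, abs_mul, abs_of_nonneg (Real.sqrt_nonneg _),
    abs_of_nonneg (by positivity : 0 ≤ ℓ ^ 2 / N)]

lemma sqrt_two_sq_div_mul_add_sq_div_le (ℓ z : ℝ) {N : ℝ} (hN : 1 ≤ N) :
    Real.sqrt (2 * ℓ ^ 2 / N) * |z| + ℓ ^ 2 / N ≤ (1 + |ℓ|) ^ 2 / Real.sqrt N * (1 + |z|) := by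
  have hsN : 0 < Real.sqrt N := Real.sqrt_pos.mpr (by linarith)
  have hsN_le : Real.sqrt N ≤ N := by
    rw [Real.sqrt_le_left (by linarith)]; nlinarith
  have hsqrt : Real.sqrt (2 * ℓ ^ 2 / N) = Real.sqrt 2 * |ℓ| / Real.sqrt N := by
    rw [Real.sqrt_div' _ (by linarith), Real.sqrt_mul zero_le_two, Real.sqrt_sq_eq_abs]
  have hsq2 : Real.sqrt 2 ≤ 2 := by
    rw [Real.sqrt_le_left zero_le_two]; norm_num
  have hdiv : ℓ ^ 2 / N ≤ ℓ ^ 2 / Real.sqrt N := div_le_div_of_nonneg_left (sq_nonneg ℓ) hsN hsN_le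
  rw [hsqrt, div_mul_eq_mul_div, div_mul_eq_mul_div]
  refine (add_le_add le_rfl hdiv).trans ?_
  rw [← add_div]
  gcongr
  nlinarith [abs_nonneg ℓ, abs_nonneg z, sq_abs ℓ, mul_nonneg (abs_nonneg ℓ) (abs_nonneg z),
    mul_le_mul_of_nonneg_right hsq2 (mul_nonneg (abs_nonneg ℓ) (abs_nonneg z))]

theorem stmt_12_general (ℓ : ℝ) :
    ∃ M : ℝ, 0 < M ∧
      ∀ N : ℕ, 0 < N → ∀ ζ : Fin N → ℝ, ∀ i : Fin N, ∀ f : ℝ → ℝ, LipschitzWith 1 f →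
        |(∫ ξ, f (Rfun ℓ N ζ ξ) ∂gaussPi N) - ∫ ξ, f (Rifun ℓ N ζ ξ i) ∂gaussPi N|
          ≤ M / Real.sqrt N * (1 + |ζ i|) := by
  refine ⟨(1 + |ℓ|) ^ 2, by positivity, fun N hN ζ i f hf => ?_⟩
  have hR := integrable_mul_sum_sub_mul_sum_sq_gaussPi N (-Real.sqrt (2 * ℓ ^ 2 / N))
    (ℓ ^ 2 / N) ζ Finset.univ
  have hRi := integrable_mul_sum_sub_mul_sum_sq_gaussPi N (-Real.sqrt (2 * ℓ ^ 2 / N))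
    (ℓ ^ 2 / N) ζ (Finset.univ.erase i)
  calc _ ≤ (1 : NNReal) * ∫ ξ, |Rfun ℓ N ζ ξ - Rifun ℓ N ζ ξ i| ∂gaussPi N :=
        hf.abs_integral_comp_sub_le hR hRi
    _ ≤ Real.sqrt (2 * ℓ ^ 2 / N) * |ζ i| + ℓ ^ 2 / N := by
        rw [NNReal.coe_one, one_mul]; exact integral_abs_Rfun_sub_Rifun_le ℓ N ζ i
    _ ≤ _ := sqrt_two_sq_div_mul_add_sq_div_le ℓ (ζ i) (by exact_mod_cast hN)

/-- Lemma `lem:wass2`, Equation `eqn:estst1`: there is a constant `M > 0`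
depending only on `ℓ` such that for all `N`, `ζ ∈ ℝ^N` and `1 ≤ i ≤ N`,
`Wass(R(ζ,ξ), R_i(ζ,ξ)) ≤ (M/√N)(|ζ_i| + 1)`, the Wasserstein distance being
expressed via 1-Lipschitz test functions. -/
theorem stmt_12 (ℓ : ℝ) (hℓ : 0 < ℓ) :
    ∃ M : ℝ, 0 < M ∧
      ∀ N : ℕ, 0 < N → ∀ ζ : Fin N → ℝ, ∀ i : Fin N, ∀ f : ℝ → ℝ, LipschitzWith 1 f →
        |(∫ ξ, f (Rfun ℓ N ζ ξ) ∂gaussPi N) - ∫ ξ, f (Rifun ℓ N ζ ξ i) ∂gaussPi N|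
          ≤ M / Real.sqrt N * (1 + |ζ i|) :=
  stmt_12_general ℓ
end

section
/- Let X and Z be real random variables whose distributions are atomless (equivalently, have continuous cumulative distribution functions). Then | E[ e^{X} 1_{X < 0} ] − E[ e^{Z} 1_{Z < 0} ] | ≤ 2 · sup_{t∈ℝ} | P(X ≤ t) − P(Z ≤ t) |. -/
open MeasureTheory Set Real

/-! Layer cake: for `t ∈ (0, 1]` the superlevel set `{e^X 1_{X<0} ≥ t}` is `{log t ≤ X < 0}`,
so `E[e^X 1_{X<0}] = ∫₀¹ (F(0) - F(log t)) dt` with `F` the CDF of `X`; atomlessness is what lets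
the strict inequalities be replaced by non-strict ones. For each `t` the difference of the
integrands for `X` and `Z` is a difference of two CDF gaps, hence at most twice the
Kolmogorov–Smirnov distance. -/

section

variable {Ω : Type*} [MeasurableSpace Ω] (P : Measure Ω) (X : Ω → ℝ)

lemma measure_lt_eq_measure_le_of_atomless (hX : ∀ t, P {ω | X ω = t} = 0) (s : ℝ) :
    P {ω | X ω < s} = P {ω | X ω ≤ s} := by
  have hsplit : {ω | X ω ≤ s} = {ω | X ω < s} ∪ {ω | X ω = s} := by
    ext ω
    simp [le_iff_lt_or_eq]
  rw [hsplit, measure_congr (union_ae_eq_left_of_ae_eq_empty (ae_eq_empty.2 (hX s)))]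

lemma integrableOn_measureReal_le_comp_log [IsFiniteMeasure P] :
    IntegrableOn (fun t => P.real {ω | X ω ≤ log t}) (Ioc 0 1) := by
  have hmono : Monotone fun t => P.real {ω | X ω ≤ t} :=
    fun a b hab => measureReal_mono fun ω hω => le_trans hω hab
  refine .of_bound (by simp) (hmono.measurable.comp measurable_log).aestronglyMeasurable
    (P.real univ) (.of_forall fun t => ?_)
  rw [norm_of_nonneg measureReal_nonneg]
  exact measureReal_mono (subset_univ _)

lemma setIntegral_exp_eq_integral_Ioc_measureReal_sub [IsFiniteMeasure P] (hX : Measurable X) :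
    ∫ ω in {ω | X ω < 0}, exp (X ω) ∂P
      = ∫ t in Ioc 0 1, (P.real {ω | X ω < 0} - P.real {ω | X ω < log t}) := by
  have hs : MeasurableSet {ω | X ω < 0} := measurableSet_lt hX measurable_const
  set g := {ω | X ω < 0}.indicator fun ω => exp (X ω)
  have hg_nonneg : 0 ≤ g := indicator_nonneg fun _ _ => (exp_pos _).le
  have hg_le_one : g ≤ fun _ => 1 :=
    indicator_le' (fun ω hω => exp_le_one_iff.2 (le_of_lt hω)) fun _ _ => zero_le_one
  have hg_int : Integrable g P := by
    refine .of_bound ((measurable_exp.comp hX).indicator hs).aestronglyMeasurable 1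
      (.of_forall fun ω => ?_)
    rw [norm_of_nonneg (hg_nonneg ω)]
    exact hg_le_one ω
  rw [← integral_indicator hs, hg_int.integral_eq_integral_Ioc_meas_le
    (.of_forall hg_nonneg) (.of_forall hg_le_one)]
  refine setIntegral_congr_fun measurableSet_Ioc fun t ⟨ht0, ht1⟩ => ?_
  have hlog : log t ≤ 0 := log_nonpos ht0.le ht1
  have hsuper : {ω | t ≤ g ω} = {ω | X ω < 0} \ {ω | X ω < log t} := by
    ext ω
    by_cases hω : X ω < 0
    · simp [g, hω, log_le_iff_le_exp ht0]
    · simp [g, hω, ht0]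
  have hsub : {ω | X ω < log t} ⊆ {ω | X ω < 0} := fun ω hω => lt_of_lt_of_le hω hlog
  rw [hsuper, measureReal_sdiff hsub (measurableSet_lt hX measurable_const)]

end

lemma abs_setIntegral_Ioc_sub_le {F G u : ℝ → ℝ} {a M : ℝ}
    (hF : IntegrableOn (fun t => F (u t)) (Ioc 0 1))
    (hG : IntegrableOn (fun t => G (u t)) (Ioc 0 1))
    (hFG : ∀ s, |F s - G s| ≤ M) :
    |(∫ t in Ioc 0 1, (F a - F (u t))) - ∫ t in Ioc 0 1, (G a - G (u t))| ≤ 2 * M := by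
  have hF' : IntegrableOn (fun t => F a - F (u t)) (Ioc 0 1) :=
    (integrableOn_const (by simp)).sub hF
  have hG' : IntegrableOn (fun t => G a - G (u t)) (Ioc 0 1) :=
    (integrableOn_const (by simp)).sub hG
  rw [← integral_sub hF' hG']
  calc ‖∫ t in Ioc 0 1, ((F a - F (u t)) - (G a - G (u t)))‖
      ≤ 2 * M * volume.real (Ioc (0 : ℝ) 1) := by
        refine norm_setIntegral_le_of_norm_le_const (by simp) fun t _ => ?_
        calc ‖(F a - F (u t)) - (G a - G (u t))‖ = |(F a - G a) - (F (u t) - G (u t))| := by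
              rw [Real.norm_eq_abs]; ring_nf
          _ ≤ |F a - G a| + |F (u t) - G (u t)| := abs_sub _ _
          _ ≤ 2 * M := by linarith [hFG a, hFG (u t)]
    _ = 2 * M := by simp

/-- The estimate used in Lemma `lem:do4`: for real random variables `X`, `Z`
with atomless laws (continuous CDFs),
`|E[e^X 1_{X<0}] − E[e^Z 1_{Z<0}]| ≤ 2 sup_t |P(X ≤ t) − P(Z ≤ t)|`,
i.e. twice the Kolmogorov–Smirnov distance between the laws. -/
theorem stmt_18 {Ω₁ Ω₂ : Type*} [MeasurableSpace Ω₁] [MeasurableSpace Ω₂]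
    (P₁ : Measure Ω₁) (P₂ : Measure Ω₂)
    [IsProbabilityMeasure P₁] [IsProbabilityMeasure P₂]
    (X : Ω₁ → ℝ) (Z : Ω₂ → ℝ) (hX : Measurable X) (hZ : Measurable Z)
    (hXatomless : ∀ t : ℝ, P₁ {ω | X ω = t} = 0)
    (hZatomless : ∀ t : ℝ, P₂ {ω | Z ω = t} = 0) :
    |(∫ ω in {ω | X ω < 0}, Real.exp (X ω) ∂P₁) -
        ∫ ω in {ω | Z ω < 0}, Real.exp (Z ω) ∂P₂|
      ≤ 2 * ⨆ t : ℝ, |(P₁ {ω | X ω ≤ t}).toReal - (P₂ {ω | Z ω ≤ t}).toReal| := by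
  have hbdd :
      BddAbove (range fun t => |(P₁ {ω | X ω ≤ t}).toReal - (P₂ {ω | Z ω ≤ t}).toReal|) :=
    ⟨1, forall_mem_range.2 fun _ => abs_sub_le_of_nonneg_of_le
      measureReal_nonneg measureReal_le_one measureReal_nonneg measureReal_le_one⟩
  rw [setIntegral_exp_eq_integral_Ioc_measureReal_sub P₁ X hX,
    setIntegral_exp_eq_integral_Ioc_measureReal_sub P₂ Z hZ]
  simp only [measureReal_def, measure_lt_eq_measure_le_of_atomless _ _ hXatomless,
    measure_lt_eq_measure_le_of_atomless _ _ hZatomless]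
  exact abs_setIntegral_Ioc_sub_le (integrableOn_measureReal_le_comp_log P₁ X)
    (integrableOn_measureReal_le_comp_log P₂ Z) (le_ciSup hbdd)
end
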